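/- Necessity of flow balance for queue stability: if Q(t+1) = max(Q(t) - b(t), 0) + a(t) with nonnegative a, b, Q(1) = 0, and limsup_{t→∞} (1/t)·Σ_{τ=1}^{t} Q(τ) < ∞, then limsup_{t→∞} (1/t)·Σ_{τ=1}^{t}(a(τ) - b(τ)) ≤ 0. -/

import Mathlib

/-!
Summing the recursion gives `∑_{τ ≤ t} (a τ - b τ) ≤ Q (t + 1)`, so it suffices that `Q t = o(t)`.
A queue drains by at most `C` per slot, so a backlog `Q n ≥ ε n` keeps the queue above `ε n / 2`
for the next `ε n / (2 C)` slots. That forces `∑_{τ ≤ (1 + ε / (2 C)) n} Q τ ≳ ε² n² / (4 C)`,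
which a bounded time average forbids for large `n`.
-/

open Filter Finset Asymptotics

section Sequence

variable {f : ℕ → ℝ} {L : ℝ}

theorem sub_mul_le_add_of_sub_le_succ (hf : ∀ n, f n - L ≤ f (n + 1)) (n k : ℕ) :
    f n - L * k ≤ f (n + k) := by
  induction k with
  | zero => simp
  | succ k ih =>
    rw [← add_assoc]
    push_cast
    linarith [hf (n + k)]

theorem mul_sub_le_sum_range_add (hL : 0 ≤ L) (hf : ∀ n, f n - L ≤ f (n + 1)) (n m : ℕ) :
    m * (f n - L * m) ≤ ∑ k ∈ range m, f (n + k) := by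
  simpa using card_nsmul_le_sum (range m) (fun k => f (n + k)) (f n - L * m) fun k hk => by
    have hkm : (k : ℝ) ≤ m := by exact_mod_cast (mem_range.1 hk).le
    linarith [sub_mul_le_add_of_sub_le_succ hf n k, mul_le_mul_of_nonneg_left hkm hL]

theorem isLittleO_natCast_of_sum_range_le (hf0 : ∀ n, 0 ≤ f n) (hf : ∀ n, f n - L ≤ f (n + 1))
    {M : ℝ} (hM : ∀ᶠ n in atTop, ∑ i ∈ range n, f i ≤ M * n) :
    f =o[atTop] fun n => (n : ℝ) := by
  wlog hL : 0 < L generalizing L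
  · exact this (fun n => by linarith [hf n]) one_pos
  refine IsLittleO.of_bound fun ε hε => ?_
  obtain ⟨N, hN⟩ := eventually_atTop.1 hM
  set δ := ε / (2 * L)
  have hδ : 0 < δ := by positivity
  have hfloor : Tendsto (fun n : ℕ => (⌊δ * n⌋₊ : ℝ)) atTop atTop :=
    tendsto_natCast_atTop_atTop.comp <|
      tendsto_nat_floor_atTop.comp (tendsto_natCast_atTop_atTop.const_mul_atTop hδ)
  filter_upwards [eventually_ge_atTop (max N 1), hfloor.eventually_gt_atTop (2 * M * (1 + δ) / ε)]
    with n hn hmM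
  set m := ⌊δ * n⌋₊
  have hn0 : (0 : ℝ) < n := by exact_mod_cast (le_max_right N 1).trans hn
  have hM0 : 0 ≤ M := nonneg_of_mul_nonneg_left
    ((sum_nonneg fun i _ => hf0 i).trans (hN n ((le_max_left N 1).trans hn))) hn0
  have hmδ : (m : ℝ) ≤ δ * n := Nat.floor_le (by positivity)
  have hLm : L * m ≤ ε * n / 2 := by
    calc L * m ≤ L * (δ * n) := mul_le_mul_of_nonneg_left hmδ hL.le
      _ = ε * n / 2 := by simp only [δ]; field_simp
  have hwindow : m * (f n - L * m) ≤ M * (n + m) := by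
    calc m * (f n - L * m) ≤ ∑ k ∈ range m, f (n + k) := mul_sub_le_sum_range_add hL.le hf n m
      _ ≤ ∑ i ∈ range (n + m), f i := by
          rw [sum_range_add]
          exact le_add_of_nonneg_left (sum_nonneg fun i _ => hf0 i)
      _ ≤ M * (n + m) := by exact_mod_cast hN (n + m) (by omega)
  rw [Real.norm_of_nonneg (hf0 n), RCLike.norm_natCast]
  by_contra! hfn
  have hmε : M * (1 + δ) < m * ε / 2 := by
    rw [div_lt_iff₀ hε] at hmM
    linarith
  have : (m : ℝ) * (ε * n / 2) < m * (ε * n / 2) := by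
    calc (m : ℝ) * (ε * n / 2) ≤ m * (f n - L * m) :=
          mul_le_mul_of_nonneg_left (by linarith) m.cast_nonneg
      _ ≤ M * (n + m) := hwindow
      _ ≤ M * ((1 + δ) * n) := mul_le_mul_of_nonneg_left (by linarith) hM0
      _ = M * (1 + δ) * n := by ring
      _ < m * ε / 2 * n := mul_lt_mul_of_pos_right hmε hn0
      _ = m * (ε * n / 2) := by ring
  exact lt_irrefl _ this

end Sequence

section Lindley

variable {q r s : ℕ → ℝ}

theorem sub_add_le_lindley_succ (hq : ∀ n, q (n + 1) = max (q n - s n) 0 + r n) (n : ℕ) :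
    q n - s n + r n ≤ q (n + 1) := by
  rw [hq n]
  exact add_le_add_left (le_max_left _ _) _

theorem lindley_nonneg (hq : ∀ n, q (n + 1) = max (q n - s n) 0 + r n) (hr : ∀ n, 0 ≤ r n)
    (h0 : 0 ≤ q 0) : ∀ n, 0 ≤ q n
  | 0 => h0
  | n + 1 => by rw [hq n]; exact add_nonneg (le_max_right _ _) (hr n)

theorem sum_range_sub_le_lindley (hq : ∀ n, q (n + 1) = max (q n - s n) 0 + r n) (n : ℕ) :
    ∑ i ∈ range n, (r i - s i) ≤ q n - q 0 := by
  induction n with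
  | zero => simp
  | succ n ih =>
    rw [sum_range_succ]
    linarith [sub_add_le_lindley_succ hq n]

theorem lindley_sub_le_succ (hq : ∀ n, q (n + 1) = max (q n - s n) 0 + r n) (hr : ∀ n, 0 ≤ r n)
    {C : ℝ} (hs : ∀ n, s n ≤ C) (n : ℕ) : q n - C ≤ q (n + 1) := by
  linarith [sub_add_le_lindley_succ hq n, hs n, hr n]

end Lindley

theorem sum_Icc_one_eq_sum_range (g : ℕ → ℝ) (t : ℕ) :
    ∑ τ ∈ Icc 1 t, g τ = ∑ i ∈ range t, g (i + 1) := by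
  rw [range_eq_Ico, sum_Ico_add', zero_add, Ico_add_one_right_eq_Icc]

theorem stmt_8_general (Q a b : ℕ → ℝ) (C : ℝ)
    (ha : ∀ t, 0 ≤ a t)
    (hbC : ∀ t, b t ≤ C)
    (hQ1 : Q 1 = 0)
    (hrec : ∀ t, 1 ≤ t → Q (t + 1) = max (Q t - b t) 0 + a t)
    (hstab : ∃ M : ℝ, ∀ᶠ t : ℕ in Filter.atTop,
      (1 / (t : ℝ)) * ∑ τ ∈ Finset.Icc 1 t, Q τ ≤ M) :
    Filter.limsup (fun t : ℕ => (1 / (t : ℝ)) * ∑ τ ∈ Finset.Icc 1 t, (a τ - b τ))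
      Filter.atTop ≤ 0 := by
  obtain ⟨M, hM⟩ := hstab
  set q : ℕ → ℝ := fun n => Q (n + 1)
  have hq : ∀ n, q (n + 1) = max (q n - b (n + 1)) 0 + a (n + 1) := fun n =>
    hrec (n + 1) n.succ_pos
  have hq0 : q 0 = 0 := hQ1
  have hq_nonneg : ∀ n, 0 ≤ q n := lindley_nonneg hq (fun n => ha _) hq0.ge
  have hsum : ∀ t, ∑ τ ∈ Icc 1 t, (a τ - b τ) ≤ q t := fun t => by
    simpa [sum_Icc_one_eq_sum_range, hq0] using sum_range_sub_le_lindley hq t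
  have hcesaro : ∀ᶠ n in atTop, ∑ i ∈ range n, q i ≤ M * n := by
    filter_upwards [hM, eventually_gt_atTop 0] with t ht ht0
    rw [sum_Icc_one_eq_sum_range, one_div, inv_mul_le_iff₀ (by positivity)] at ht
    linarith
  have hq_littleO : q =o[atTop] fun n => (n : ℝ) := isLittleO_natCast_of_sum_range_le hq_nonneg
    (lindley_sub_le_succ hq (fun n => ha _) fun n => hbC _) hcesaro
  refine le_of_forall_pos_le_add fun ε hε => ?_
  rw [zero_add]
  refine limsup_le_of_le (isCoboundedUnder_le_of_eventually_le atTop (x := -C) ?_) ?_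
  · filter_upwards [eventually_gt_atTop 0] with t ht
    have := card_nsmul_le_sum (Icc 1 t) (fun τ => a τ - b τ) (-C) fun τ _ => by
      linarith [ha τ, hbC τ]
    rw [one_div, le_inv_mul_iff₀ (by positivity)]
    simpa [mul_comm] using this
  · filter_upwards [hq_littleO.bound hε, eventually_gt_atTop 0] with t hqt ht
    rw [Real.norm_of_nonneg (hq_nonneg t), RCLike.norm_natCast] at hqt
    rw [one_div, inv_mul_le_iff₀ (by positivity)]
    linarith [hsum t]

/-- Necessity of flow balance for queue stability (deterministic version). -/
theorem stmt_8 (Q a b : ℕ → ℝ) (C : ℝ)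
    (ha : ∀ t, 0 ≤ a t) (hb : ∀ t, 0 ≤ b t)
    (haC : ∀ t, a t ≤ C) (hbC : ∀ t, b t ≤ C)
    (hQ1 : Q 1 = 0)
    (hrec : ∀ t, 1 ≤ t → Q (t + 1) = max (Q t - b t) 0 + a t)
    (hstab : ∃ M : ℝ, ∀ᶠ t : ℕ in Filter.atTop,
      (1 / (t : ℝ)) * ∑ τ ∈ Finset.Icc 1 t, Q τ ≤ M) :
    Filter.limsup (fun t : ℕ => (1 / (t : ℝ)) * ∑ τ ∈ Finset.Icc 1 t, (a τ - b τ))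
      Filter.atTop ≤ 0 :=
  stmt_8_general Q a b C ha hbC hQ1 hrec hstab
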